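/- Let σ over ℚ be the unique stream satisfying σ(0) = 1 and σ' = σ ⊗ σ ⊗ σ (shuffle), i.e., σ(n+1) = (σ ⊗ σ ⊗ σ)(n) for all n; equivalently σ(n) = (2n−1)!! is the double factorial of odd numbers. Then (x − ½·1) ⊗ σ ⊗ σ + ½·1 = 0, where 1 = (1,0,0,...), x = (0,1,0,0,...), ⊗ is shuffle product, and operations on scalars are via scalar multiplication. -/
import Mathlib


def shuffle (σ τ : ℕ → ℚ) : ℕ → ℚ :=
  fun i => ∑ j ∈ Finset.range (i + 1), (Nat.choose i j : ℚ) * σ j * τ (i - j)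

def sone : ℕ → ℚ := fun i => if i = 0 then 1 else 0

def sX : ℕ → ℚ := fun i => if i = 1 then 1 else 0

/-- The stream of double factorials of odd numbers. -/
def dblFact : ℕ → ℚ :=
  fun n => (Nat.factorial (2 * n) : ℚ) / (2 ^ n * Nat.factorial n)

lemma dblFact_succ (j : ℕ) : dblFact (j + 1) = (2 * j + 1) * dblFact j := by
  unfold dblFact
  have h1 : 2 * (j + 1) = 2 * j + 1 + 1 := by ring
  rw [h1, Nat.factorial_succ, Nat.factorial_succ, Nat.factorial_succ]
  have hf : (Nat.factorial j : ℚ) ≠ 0 := Nat.cast_ne_zero.mpr (Nat.factorial_ne_zero j)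
  have h2 : (2:ℚ) ^ (j+1) ≠ 0 := by positivity
  push_cast
  field_simp
  ring

lemma shuffle_apply (σ τ : ℕ → ℚ) (i : ℕ) :
    shuffle σ τ i = ∑ j ∈ Finset.range (i + 1), (Nat.choose i j : ℚ) * (σ j * τ (i - j)) := by
  unfold shuffle
  exact Finset.sum_congr rfl fun j _ => by ring

lemma tau_succ (n : ℕ) :
    shuffle dblFact dblFact (n + 1) = 2 * (n + 1) * shuffle dblFact dblFact n := by
  rw [shuffle_apply, shuffle_apply]
  rw [Finset.sum_choose_succ_mul (fun a b => dblFact a * dblFact b) n]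
  have refl1 : ∑ j ∈ Finset.range (n + 1), (Nat.choose n j : ℚ) *
        (dblFact j * dblFact (n + 1 - j))
      = ∑ j ∈ Finset.range (n + 1), (Nat.choose n j : ℚ) *
        (dblFact (j + 1) * dblFact (n - j)) := by
    rw [← Finset.sum_range_reflect]
    simp only [Nat.add_sub_cancel]
    refine Finset.sum_congr rfl fun j hj => ?_
    have hjn : j ≤ n := Nat.lt_succ_iff.mp (Finset.mem_range.mp hj)
    rw [Nat.choose_symm hjn]
    have : n + 1 - (n - j) = j + 1 := by omega
    rw [this]
    ring
  have key : ∑ j ∈ Finset.range (n + 1), (Nat.choose n j : ℚ) *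
        (dblFact (j + 1) * dblFact (n - j))
      = (n + 1) * ∑ j ∈ Finset.range (n + 1), (Nat.choose n j : ℚ) *
        (dblFact j * dblFact (n - j)) := by
    have hs : ∀ j ∈ Finset.range (n + 1), (Nat.choose n j : ℚ) *
          (dblFact (j + 1) * dblFact (n - j))
        = (2 * j + 1) * ((Nat.choose n j : ℚ) * (dblFact j * dblFact (n - j))) := by
      intro j _
      rw [dblFact_succ]; ring
    rw [Finset.sum_congr rfl hs]
    have h2 : ∑ j ∈ Finset.range (n + 1),
          ((2 * j + 1 : ℚ)) * ((Nat.choose n j : ℚ) * (dblFact j * dblFact (n - j)))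
        = ∑ j ∈ Finset.range (n + 1),
          ((2 * ((n : ℚ) - j) + 1)) * ((Nat.choose n j : ℚ) * (dblFact j * dblFact (n - j))) := by
      rw [← Finset.sum_range_reflect]
      simp only [Nat.add_sub_cancel]
      refine Finset.sum_congr rfl fun j hj => ?_
      have hjn : j ≤ n := Nat.lt_succ_iff.mp (Finset.mem_range.mp hj)
      rw [Nat.choose_symm hjn, Nat.sub_sub_self hjn, Nat.cast_sub hjn]
      ring
    have h3 : (2:ℚ) * ∑ j ∈ Finset.range (n + 1),
          ((2 * j + 1 : ℚ)) * ((Nat.choose n j : ℚ) * (dblFact j * dblFact (n - j)))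
        = ∑ j ∈ Finset.range (n + 1),
          (2 * ((n : ℚ) + 1)) * ((Nat.choose n j : ℚ) * (dblFact j * dblFact (n - j))) := by
      rw [two_mul]
      nth_rewrite 2 [h2]
      rw [← Finset.sum_add_distrib]
      exact Finset.sum_congr rfl fun j _ => by ring
    rw [← Finset.mul_sum] at h3
    linarith [h3]
  rw [refl1, key]
  ring

/-- (x − ½·1) ⊗ σ ⊗ σ + ½·1 = 0 for the double-factorial stream σ. -/
theorem dblFact_shuffle_eq :
    shuffle (sX - (1/2 : ℚ) • sone) (shuffle dblFact dblFact) + (1/2 : ℚ) • sone = 0 := by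
  funext i
  simp only [Pi.add_apply, Pi.zero_apply, Pi.smul_apply, smul_eq_mul]
  match i with
  | 0 =>
    simp [shuffle, sX, sone, dblFact]
  | (k + 1) =>
    have hτ := tau_succ k
    rw [shuffle_apply]
    rw [Finset.sum_choose_succ_mul
      (fun a b => (sX - (1/2 : ℚ) • sone) a * (shuffle dblFact dblFact) b) k]
    have hA : ∑ j ∈ Finset.range (k + 1), (Nat.choose k j : ℚ) *
          (sX j * shuffle dblFact dblFact (k + 1 - j))
        = k * shuffle dblFact dblFact k := by
      rw [Finset.sum_eq_single 1]
      · simp [sX]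
      · intro j _ hj1
        simp [sX, hj1]
      · intro h
        have hk : k = 0 := by
          simp only [Finset.mem_range] at h; omega
        subst hk
        simp
    have hB : ∑ j ∈ Finset.range (k + 1), (Nat.choose k j : ℚ) *
          (sone j * shuffle dblFact dblFact (k + 1 - j))
        = shuffle dblFact dblFact (k + 1) := by
      rw [Finset.sum_eq_single 0]
      · simp [sone]
      · intro j _ hj0
        simp [sone, hj0]
      · simp
    have e1 : ∑ j ∈ Finset.range (k + 1), (Nat.choose k j : ℚ) *
          ((sX - (1/2 : ℚ) • sone) j * shuffle dblFact dblFact (k + 1 - j))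
        = k * shuffle dblFact dblFact k
          - (1/2) * shuffle dblFact dblFact (k + 1) := by
      rw [← hA, ← hB, Finset.mul_sum, ← Finset.sum_sub_distrib]
      refine Finset.sum_congr rfl fun j _ => ?_
      simp only [Pi.sub_apply, Pi.smul_apply, smul_eq_mul]
      ring
    have e2 : ∑ j ∈ Finset.range (k + 1), (Nat.choose k j : ℚ) *
          ((sX - (1/2 : ℚ) • sone) (j + 1) * shuffle dblFact dblFact (k - j))
        = shuffle dblFact dblFact k := by
      rw [Finset.sum_eq_single 0]
      · simp [sX, sone]
      · intro j _ hj0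
        have h1 : sX (j + 1) = 0 := by simp [sX]; omega
        have h2 : sone (j + 1) = 0 := by simp [sone]
        simp [h1, h2]
      · simp
    rw [e1, e2, hτ]
    simp [sone]
    ring
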